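/- For every integer m ≥ 2, the largest positive integer n with ‖n‖ ≤ m is: 3^k if m = 3k; 4·3^{k−1} if m = 3k + 1 (with k ≥ 1); and 2·3^k if m = 3k + 2. That is, every positive integer n with ‖n‖ ≤ m satisfies n ≤ M(m), where M(3k) = 3^k, M(3k+1) = 4·3^{k−1}, M(3k+2) = 2·3^k, and moreover ‖M(m)‖ = m. -/
import Mathlib


/-- Arithmetic expressions built from 1's using addition and multiplication. -/
inductive Expr : Type where
  | one : Expr
  | add : Expr → Expr → Expr
  | mul : Expr → Expr → Expr

/-- The value of an expression. -/
def Expr.val : Expr → ℕ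
  | .one => 1
  | .add a b => a.val + b.val
  | .mul a b => a.val * b.val

/-- The number of 1's used in an expression. -/
def Expr.cost : Expr → ℕ
  | .one => 1
  | .add a b => a.cost + b.cost
  | .mul a b => a.cost + b.cost

/-- The integer complexity ‖n‖: the least number of 1's needed to write `n`
as an expression built from 1's using only addition and multiplication. -/
noncomputable def cplx (n : ℕ) : ℕ :=
  sInf {k | ∃ e : Expr, e.val = n ∧ e.cost = k}

/-- M(3k) = 3^k, M(3k+1) = 4·3^(k-1), M(3k+2) = 2·3^k. -/
def Mbig (m : ℕ) : ℕ :=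
  if m % 3 = 0 then 3 ^ (m / 3)
  else if m % 3 = 1 then 4 * 3 ^ (m / 3 - 1)
  else 2 * 3 ^ (m / 3)

def f : ℕ → ℕ
  | 0 => 1
  | 1 => 1
  | 2 => 2
  | 3 => 3
  | 4 => 4
  | (n+5) => 3 * f (n+2)

lemma f_rec (n : ℕ) : f (n+5) = 3 * f (n+2) := rfl

lemma key : ∀ s a b : ℕ, a + b = s → 1 ≤ a → 1 ≤ b →
    f a + f b ≤ f (a+b) ∧ f a * f b ≤ f (a+b) := by
  intro s
  induction s using Nat.strong_induction_on with
  | _ s ih =>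
    intro a b hs ha hb
    rcases le_or_gt a 4 with h4a | h4a
    · rcases le_or_gt b 4 with h4b | h4b
      · subst hs; interval_cases a <;> interval_cases b <;> decide
      · obtain ⟨c, rfl⟩ : ∃ c, b = c + 5 := ⟨b - 5, by omega⟩
        have ih' := ih (a + (c+2)) (by omega) a (c+2) rfl ha (by omega)
        have h1 : f (c+5) = 3 * f (c+2) := rfl
        have h2 : f (a + (c+5)) = 3 * f (a + (c+2)) := by
          have e1 : a + (c+5) = (a + c) + 5 := by ring
          have e2 : (a+c)+2 = a + (c+2) := by ring
          rw [e1, f_rec, e2]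
        refine ⟨?_, ?_⟩
        · rw [h1, h2]; omega
        · rw [h1, h2]; nlinarith [ih'.2]
    · obtain ⟨c, rfl⟩ : ∃ c, a = c + 5 := ⟨a - 5, by omega⟩
      have ih' := ih ((c+2) + b) (by omega) (c+2) b rfl (by omega) hb
      have h1 : f (c+5) = 3 * f (c+2) := rfl
      have h2 : f ((c+5) + b) = 3 * f ((c+2) + b) := by
        have e1 : (c+5) + b = (c + b) + 5 := by ring
        have e2 : (c+b)+2 = (c+2) + b := by ring
        rw [e1, f_rec, e2]
      refine ⟨?_, ?_⟩
      · rw [h1, h2]; omega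
      · rw [h1, h2]; nlinarith [ih'.2]

lemma cost_pos (e : Expr) : 1 ≤ e.cost := by
  induction e <;> simp [Expr.cost] <;> omega

lemma val_le_f (e : Expr) : e.val ≤ f e.cost := by
  induction e with
  | one => exact le_refl 1
  | add a b iha ihb =>
      have h := (key _ a.cost b.cost rfl (cost_pos a) (cost_pos b)).1
      exact le_trans (Nat.add_le_add iha ihb) h
  | mul a b iha ihb =>
      have h := (key _ a.cost b.cost rfl (cost_pos a) (cost_pos b)).2
      exact le_trans (Nat.mul_le_mul iha ihb) h

lemma f_succ : ∀ n, f n ≤ f (n+1)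
  | 0 => by decide
  | 1 => by decide
  | 2 => by decide
  | 3 => by decide
  | 4 => by decide
  | (n+5) => by
      show f (n+5) ≤ f (n+6)
      have h : f (n+2) ≤ f (n+3) := f_succ (n+2)
      have e1 : f (n+5) = 3 * f (n+2) := rfl
      have e2 : f (n+6) = 3 * f (n+3) := rfl
      omega

lemma f_mono : Monotone f := monotone_nat_of_le_succ f_succ

lemma f_lt : ∀ n, f (n+1) < f (n+2)
  | 0 => by decide
  | 1 => by decide
  | 2 => by decide
  | 3 => by decide
  | (n+4) => by
      show f (n+5) < f (n+6)
      have h : f (n+2) < f (n+3) := f_lt (n+1)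
      have e1 : f (n+5) = 3 * f (n+2) := rfl
      have e2 : f (n+6) = 3 * f (n+3) := rfl
      omega

lemma Mbig_add3 (n : ℕ) (hn : 2 ≤ n) : Mbig (n+3) = 3 * Mbig n := by
  unfold Mbig
  have h3 : (n+3) % 3 = n % 3 := by omega
  have hd : (n+3) / 3 = n/3 + 1 := by omega
  rw [h3, hd]
  rcases (show n % 3 = 0 ∨ n % 3 = 1 ∨ n % 3 = 2 by omega) with h | h | h
  · simp [h, pow_succ]; ring
  · rw [if_neg (by omega), if_pos h, if_neg (by omega), if_pos h,
      show n/3 + 1 - 1 = (n/3 - 1) + 1 by omega, pow_succ]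
    ring
  · simp [h, pow_succ]; omega

lemma f_eq_M : ∀ m, 2 ≤ m → f m = Mbig m
  | 0, h => by omega
  | 1, h => by omega
  | 2, _ => by decide
  | 3, _ => by decide
  | 4, _ => by decide
  | (n+5), _ => by
      have h := f_eq_M (n+2) (by omega)
      have e1 : f (n+5) = 3 * f (n+2) := rfl
      rw [e1, h, ← Mbig_add3 (n+2) (by omega)]

def etwo : Expr := .add .one .one
def ethree : Expr := .add .one etwo
def efour : Expr := .mul etwo etwo

def mp (e : Expr) : ℕ → Expr
  | 0 => e
  | (k+1) => .mul ethree (mp e k)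

lemma mp_val (e : Expr) (k : ℕ) : (mp e k).val = 3^k * e.val := by
  induction k with
  | zero => simp [mp]
  | succ k ih => simp [mp, Expr.val, ih, ethree, etwo, pow_succ]; ring

lemma mp_cost (e : Expr) (k : ℕ) : (mp e k).cost = 3*k + e.cost := by
  induction k with
  | zero => simp [mp]
  | succ k ih => simp [mp, Expr.cost, ih, ethree, etwo]; ring

lemma exists_expr_M (m : ℕ) (hm : 2 ≤ m) : ∃ e : Expr, e.val = Mbig m ∧ e.cost = m := by
  unfold Mbig
  rcases (show m % 3 = 0 ∨ m % 3 = 1 ∨ m % 3 = 2 by omega) with h | h | h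
  · refine ⟨mp ethree (m/3 - 1), ?_, ?_⟩ <;>
      simp [mp_val, mp_cost, h, ethree, etwo, Expr.val, Expr.cost]
    · have hk : 1 ≤ m / 3 := by omega
      have : (3:ℕ)^(m/3 - 1) * 3 = 3^(m/3 - 1 + 1) := (pow_succ 3 _).symm
      rw [this]; congr 1; omega
    · omega
  · refine ⟨mp efour (m/3 - 1), ?_, ?_⟩ <;>
      simp [mp_val, mp_cost, h, efour, etwo, Expr.val, Expr.cost]
    · ring
    · omega
  · refine ⟨mp etwo (m/3), ?_, ?_⟩ <;>
      simp [mp_val, mp_cost, h, etwo, Expr.val, Expr.cost]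
    · ring
    · omega

def rep : ℕ → Expr
  | 0 => .one
  | (n+1) => .add .one (rep n)

lemma rep_val (n : ℕ) : (rep n).val = n + 1 := by
  induction n with
  | zero => rfl
  | succ n ih => simp [rep, Expr.val, ih]; ring

lemma cplx_spec (n : ℕ) (hn : 1 ≤ n) : ∃ e : Expr, e.val = n ∧ e.cost = cplx n := by
  have hne : {k | ∃ e : Expr, e.val = n ∧ e.cost = k}.Nonempty := by
    exact ⟨(rep (n-1)).cost, rep (n-1), by rw [rep_val]; omega, rfl⟩
  exact Nat.sInf_mem hne

lemma Mbig_pos (m : ℕ) : 0 < Mbig m := by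
  unfold Mbig; split_ifs <;> positivity

/-- For m ≥ 2, Mbig m is the largest positive integer of complexity ≤ m,
and its complexity is exactly m. -/
theorem stmt9 (m : ℕ) (hm : 2 ≤ m) :
    (∀ n : ℕ, 0 < n → cplx n ≤ m → n ≤ Mbig m) ∧ cplx (Mbig m) = m := by
  constructor
  · intro n hn hcm
    obtain ⟨e, hev, hec⟩ := cplx_spec n hn
    calc n = e.val := hev.symm
      _ ≤ f e.cost := val_le_f e
      _ ≤ f m := f_mono (by omega)
      _ = Mbig m := f_eq_M m hm
  · apply le_antisymm
    · obtain ⟨e, hev, hec⟩ := exists_expr_M m hm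
      exact Nat.sInf_le ⟨e, hev, hec⟩
    · by_contra hlt
      push_neg at hlt
      obtain ⟨e, hev, hec⟩ := cplx_spec (Mbig m) (Mbig_pos m)
      have h1 : Mbig m ≤ f e.cost := hev ▸ val_le_f e
      have h2 : f e.cost ≤ f (m-1) := f_mono (by omega)
      have h3 : f (m-1) < f m := by
        have := f_lt (m-2)
        have e1 : m - 2 + 1 = m - 1 := by omega
        have e2 : m - 2 + 2 = m := by omega
        rwa [e1, e2] at this
      have h4 : f m = Mbig m := f_eq_M m hm
      omega
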